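/- Fix a, b ∈ ℝ and define φ : ℝ → ℝ⁴ by φ(t) = e^{(a+b)t}(cosh²t, sinh²t, cosh t · sinh t, cosh t · sinh t). Then for all t₁, t₂ ∈ ℝ, φ(t₁)·φ(t₂) = φ(t₁ + t₂) under the generalized bicomplex product with α = β = −1, φ(0) = (1,0,0,0), and φ(−t) is the inverse of φ(t); moreover every φ(t) satisfies φ₁φ₂ − φ₃φ₄ = 0 (so the tensor product of the two hyperbolic spirals γ(t) = e^{at}(cosh t, sinh t) and δ(t) = e^{bt}(cosh t, sinh t) is a one-parameter subgroup of the Lie group M_{t_j} for α = β = −1). -/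
import Mathlib


open Real

/-- The generalized bicomplex product on ℝ⁴ with parameters α = β = −1. -/
def gbmul (x y : ℝ × ℝ × ℝ × ℝ) : ℝ × ℝ × ℝ × ℝ :=
  (x.1 * y.1 + x.2.1 * y.2.1 + x.2.2.1 * y.2.2.1 + x.2.2.2 * y.2.2.2,
   x.1 * y.2.1 + x.2.1 * y.1 + x.2.2.1 * y.2.2.2 + x.2.2.2 * y.2.2.1,
   x.1 * y.2.2.1 + x.2.2.1 * y.1 + x.2.1 * y.2.2.2 + x.2.2.2 * y.2.1,
   x.1 * y.2.2.2 + x.2.2.2 * y.1 + x.2.1 * y.2.2.1 + x.2.2.1 * y.2.1)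

/-- The tensor product `φ` of the two hyperbolic spirals `e^{at}(cosh t, sinh t)`
and `e^{bt}(cosh t, sinh t)` is a one-parameter subgroup of the Lie group
`M_{t_j}` (for α = β = −1). -/
theorem tensor_hyperbolic_spirals_one_param_subgroup_Mtj (a b : ℝ) :
    let φ : ℝ → ℝ × ℝ × ℝ × ℝ := fun t =>
      (exp ((a + b) * t) * (cosh t ^ 2),
       exp ((a + b) * t) * (sinh t ^ 2),
       exp ((a + b) * t) * (cosh t * sinh t),
       exp ((a + b) * t) * (cosh t * sinh t))
    (∀ t₁ t₂ : ℝ, gbmul (φ t₁) (φ t₂) = φ (t₁ + t₂)) ∧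
    φ 0 = (1, 0, 0, 0) ∧
    (∀ t : ℝ, gbmul (φ t) (φ (-t)) = (1, 0, 0, 0) ∧
              gbmul (φ (-t)) (φ t) = (1, 0, 0, 0)) ∧
    (∀ t : ℝ, (φ t).1 * (φ t).2.1 - (φ t).2.2.1 * (φ t).2.2.2 = 0) := by
  intro φ
  have hom : ∀ t₁ t₂ : ℝ, gbmul (φ t₁) (φ t₂) = φ (t₁ + t₂) := by
    intro t₁ t₂
    have h : (a + b) * (t₁ + t₂) = (a + b) * t₁ + (a + b) * t₂ := by ring
    simp only [φ, gbmul, cosh_add, sinh_add, h, exp_add]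
    refine Prod.ext ?_ (Prod.ext ?_ (Prod.ext ?_ ?_)) <;> ring
  have h0 : φ 0 = (1, 0, 0, 0) := by
    simp [φ]
  exact ⟨hom, h0, fun t => ⟨by rw [hom, add_neg_cancel, h0], by rw [hom, neg_add_cancel, h0]⟩,
    fun t => by simp only [φ]; ring⟩
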